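/- arXiv:1805.02001 — 6 statements merged into one kernel-verified Lean document; each statement's English description precedes it below -/
import Mathlib

section
/- Let k⟨x_1,...,x_n⟩ be the free graded algebra with each x_i in degree 1, and let ∂ be the unique degree-1 derivation (satisfying the graded Leibniz rule ∂(ab) = ∂(a)b + (-1)^{|a|} a ∂(b)) determined by ∂(x_i) = (x_1,...,x_n) M^i (x_1,...,x_n)^T for n×n matrices M^1,...,M^n. Then ∂∘∂ = 0 (i.e., (k⟨x_1,...,x_n⟩, ∂) is a cochain DG algebra) if and only if the tuple (M^1,...,M^n) is crisscross, that is, ∑_{k=1}^n [c_j^k r_k^i − c_k^i r_j^k] = 0 (the n×n zero matrix) for all i,j ∈ {1,...,n}, where c_j^i denotes the j-th column and r_j^i the j-th row of M^i. -/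
/-!
The derivation `∂` has odd degree, so on homogeneous elements `∂²` is an ordinary derivation:
in `∂²(ab)` the two cross terms `∂a ∂b` carry the signs `(-1)^(p+1)` and `(-1)^p` and cancel.
Hence `∂² = 0` as soon as `∂²` kills the generators. Expanding `∂²(xᵢ)` gives the cubic form
`∑ C^i_{uvw} x_u x_v x_w` whose coefficients are exactly the crisscross sums, and the cubic
monomials are linearly independent in the free algebra.
-/

/-- The degree-`i` homogeneous component of the free algebra `k⟨x_1,...,x_n⟩`
with all generators in degree `1`: the span of the words of length `i`. -/
noncomputable def deg (k : Type*) [CommRing k] (n : ℕ) (i : ℕ) :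
    Submodule k (FreeAlgebra k (Fin n)) :=
  Submodule.span k
    {w | ∃ f : Fin i → Fin n, w = (List.ofFn fun j => FreeAlgebra.ι k (f j)).prod}

/-- An ordered `n`-tuple `(M^1,…,M^n)` of `n×n` matrices is *crisscross* if
`∑_{l=1}^n [c_j^l r_l^i − c_l^i r_j^l] = 0` for all `i,j`, where `c^i_j` (resp.
`r^i_j`) is the `j`-th column (resp. row) of `M^i`; entrywise this reads
`∑_l (M^l_{a j} M^i_{l b} − M^i_{a l} M^l_{j b}) = 0` for all `i,j,a,b`. -/
def crisscross {k : Type*} [CommRing k] {n : ℕ}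
    (M : Fin n → Matrix (Fin n) (Fin n) k) : Prop :=
  ∀ i j a b : Fin n,
    ∑ l : Fin n, (M l a j * M i l b - M i a l * M l j b) = 0

open FreeAlgebra

namespace FreeAlgebra

variable {R X : Type*} [CommRing R]

theorem mem_of_one_mem_of_ι_mul_mem {S : Submodule R (FreeAlgebra R X)} (one_mem : 1 ∈ S)
    (ι_mul_mem : ∀ x, ∀ y ∈ S, ι R x * y ∈ S) (a : FreeAlgebra R X) : a ∈ S := by
  suffices ∀ y ∈ S, a * y ∈ S by simpa using this 1 one_mem
  induction a with
  | grade0 r =>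
    intro y hy
    rw [Algebra.algebraMap_eq_smul_one, smul_mul_assoc, one_mul]
    exact S.smul_mem r hy
  | grade1 x => exact ι_mul_mem x
  | mul a b ha hb => exact fun y hy => mul_assoc a b y ▸ ha _ (hb y hy)
  | add a b ha hb => exact fun y hy => (add_mul a b y).symm ▸ add_mem (ha y hy) (hb y hy)

theorem linearIndependent_ι_mul_ι_mul_ι :
    LinearIndependent R fun t : X × X × X => ι R t.1 * ι R t.2.1 * ι R t.2.2 := by
  have hinj : Function.Injective fun t : X × X × X =>
      (FreeMonoid.of t.1 * FreeMonoid.of t.2.1 * FreeMonoid.of t.2.2 : FreeMonoid X) := by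
    rintro ⟨u, v, w⟩ ⟨u', v', w'⟩ h
    simpa using congrArg FreeMonoid.toList h
  convert (basisFreeMonoid R X).linearIndependent.comp _ hinj with t
  simp [basisFreeMonoid, equivMonoidAlgebraFreeMonoid]

theorem sum_smul_ι_mul_ι_mul_ι_eq_zero_iff [Fintype X] (C : X → X → X → R) :
    ∑ u, ∑ v, ∑ w, C u v w • (ι R u * ι R v * ι R w) = 0 ↔ ∀ u v w, C u v w = 0 := by
  refine ⟨fun h u v w => ?_, fun h => by simp [h]⟩
  refine Fintype.linearIndependent_iff.mp linearIndependent_ι_mul_ι_mul_ι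
    (fun t => C t.1 t.2.1 t.2.2) ?_ (u, v, w)
  simpa only [Fintype.sum_prod_type] using h

end FreeAlgebra

section GradedDerivation

variable {k : Type*} [CommRing k] {n : ℕ}

def IsGradedDerivation (d : FreeAlgebra k (Fin n) →ₗ[k] FreeAlgebra k (Fin n)) : Prop :=
  ∀ (p : ℕ) (a b : FreeAlgebra k (Fin n)), a ∈ deg k n p →
      d (a * b) = d a * b + ((-1 : k) ^ p) • (a * d b)

variable {d : FreeAlgebra k (Fin n) →ₗ[k] FreeAlgebra k (Fin n)}

namespace IsGradedDerivation

theorem map_one (hd : IsGradedDerivation d) : d 1 = 0 := by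
  simpa using hd 0 1 1 (Submodule.subset_span ⟨Fin.elim0, by simp⟩)

theorem map_ι_mul (hd : IsGradedDerivation d) (i : Fin n) (y : FreeAlgebra k (Fin n)) :
    d (ι k i * y) = d (ι k i) * y - ι k i * d y := by
  rw [hd 1 _ _ (Submodule.subset_span ⟨fun _ => i, by simp⟩), pow_one, neg_one_smul,
    sub_eq_add_neg]

theorem map_map_mul (hd : IsGradedDerivation d) {p : ℕ} {a : FreeAlgebra k (Fin n)}
    (ha : a ∈ deg k n p) (hda : d a ∈ deg k n (p + 1)) (b : FreeAlgebra k (Fin n)) :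
    d (d (a * b)) = d (d a) * b + a * d (d b) := by
  have hsq : (-1 : k) ^ p * (-1) ^ p = 1 := by rw [← mul_pow]; simp
  rw [hd p a b ha, map_add, map_smul, hd (p + 1) _ _ hda, hd p _ _ ha, smul_add, smul_smul, hsq,
    pow_succ]
  module

theorem map_map_ι_mul (hd : IsGradedDerivation d) (hd2 : ∀ i, d (ι k i) ∈ deg k n 2) (i : Fin n)
    (y : FreeAlgebra k (Fin n)) : d (d (ι k i * y)) = d (d (ι k i)) * y + ι k i * d (d y) :=
  hd.map_map_mul (Submodule.subset_span ⟨fun _ => i, by simp⟩) (hd2 i) y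

theorem map_map_eq_zero (hd : IsGradedDerivation d) (hd2 : ∀ i, d (ι k i) ∈ deg k n 2)
    (hdd : ∀ i, d (d (ι k i)) = 0) (x : FreeAlgebra k (Fin n)) : d (d x) = 0 := by
  refine mem_of_one_mem_of_ι_mul_mem (S := LinearMap.ker (d ∘ₗ d)) ?_ (fun i y hy => ?_) x
  · simp [hd.map_one]
  · simp_all [hd.map_map_ι_mul hd2 i y]

end IsGradedDerivation

variable (M : Fin n → Matrix (Fin n) (Fin n) k)

theorem map_ι_mem_deg_two
    (hval : ∀ i, d (ι k i) = ∑ a, ∑ b, M i a b • (ι k a * ι k b)) (i : Fin n) :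
    d (ι k i) ∈ deg k n 2 := by
  rw [hval]
  refine Submodule.sum_mem _ fun a _ => Submodule.sum_mem _ fun b _ => Submodule.smul_mem _ _ ?_
  exact Submodule.subset_span ⟨![a, b], by simp⟩

theorem IsGradedDerivation.map_map_ι (hd : IsGradedDerivation d)
    (hval : ∀ i, d (ι k i) = ∑ a, ∑ b, M i a b • (ι k a * ι k b)) (i : Fin n) :
    d (d (ι k i)) = ∑ u, ∑ v, ∑ w,
      (∑ l, (M l u v * M i l w - M i u l * M l v w)) • (ι k u * ι k v * ι k w) := by
  calc d (d (ι k i))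
      = ∑ a, ∑ b, M i a b • (d (ι k a) * ι k b - ι k a * d (ι k b)) := by
        simp only [hval i, map_sum, map_smul, hd.map_ι_mul]
    _ = (∑ l, ∑ w, ∑ u, ∑ v, (M i l w * M l u v) • (ι k u * ι k v * ι k w))
          - ∑ u, ∑ l, ∑ v, ∑ w, (M i u l * M l v w) • (ι k u * ι k v * ι k w) := by
        simp only [hval, smul_sub, Finset.sum_sub_distrib, Finset.sum_mul, Finset.mul_sum,
          smul_mul_assoc, mul_smul_comm, Finset.smul_sum, smul_smul, mul_assoc]
    _ = (∑ u, ∑ v, ∑ w, ∑ l, (M l u v * M i l w) • (ι k u * ι k v * ι k w))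
          - ∑ u, ∑ v, ∑ w, ∑ l, (M i u l * M l v w) • (ι k u * ι k v * ι k w) := by
        have reindex_left : ∀ F : Fin n → Fin n → Fin n → Fin n → FreeAlgebra k (Fin n),
            ∑ l, ∑ w, ∑ u, ∑ v, F l w u v = ∑ u, ∑ v, ∑ w, ∑ l, F l w u v := fun F =>
          (Finset.sum_congr rfl fun _ _ => Finset.sum_comm_cycle.symm).trans <|
            Finset.sum_comm.trans <| Finset.sum_congr rfl fun _ _ =>
              Finset.sum_comm.trans <| Finset.sum_congr rfl fun _ _ => Finset.sum_comm
        have reindex_right : ∀ F : Fin n → Fin n → Fin n → Fin n → FreeAlgebra k (Fin n),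
            ∑ u, ∑ l, ∑ v, ∑ w, F u l v w = ∑ u, ∑ v, ∑ w, ∑ l, F u l v w := fun F =>
          Finset.sum_congr rfl fun _ _ => Finset.sum_comm_cycle.symm
        exact congrArg₂ (· - ·) ((reindex_left _).trans (by simp only [mul_comm]))
          (reindex_right _)
    _ = _ := by simp only [Finset.sum_smul, sub_smul, Finset.sum_sub_distrib]

theorem IsGradedDerivation.crisscross_iff (hd : IsGradedDerivation d)
    (hval : ∀ i, d (ι k i) = ∑ a, ∑ b, M i a b • (ι k a * ι k b)) :
    crisscross M ↔ ∀ i, d (d (ι k i)) = 0 := by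
  simp only [hd.map_map_ι M hval, sum_smul_ι_mul_ι_mul_ι_eq_zero_iff]
  exact ⟨fun h i a j b => h i j a b, fun h i j a b => h i a j b⟩

end GradedDerivation

theorem stmt1_general {k : Type*} [Field k] (n : ℕ)
    (M : Fin n → Matrix (Fin n) (Fin n) k)
    (d : FreeAlgebra k (Fin n) →ₗ[k] FreeAlgebra k (Fin n))
    (hL : ∀ (p : ℕ) (a b : FreeAlgebra k (Fin n)), a ∈ deg k n p →
      d (a * b) = d a * b + ((-1 : k) ^ p) • (a * d b))
    (hval : ∀ i, d (FreeAlgebra.ι k i) =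
      ∑ a : Fin n, ∑ b : Fin n, M i a b • (FreeAlgebra.ι k a * FreeAlgebra.ι k b)) :
    (∀ x, d (d x) = 0) ↔ crisscross M := by
  have hd : IsGradedDerivation d := hL
  rw [hd.crisscross_iff M hval]
  exact ⟨fun h i => h _, hd.map_map_eq_zero (map_ι_mem_deg_two M hval)⟩

/-- for the degree-1 derivation `∂` of `k⟨x₁,…,xₙ⟩` (generators
in degree 1, graded Leibniz rule) determined by
`∂(xᵢ) = (x₁,…,xₙ) Mⁱ (x₁,…,xₙ)ᵀ`, we have `∂∘∂ = 0` if and only if the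
tuple `(M¹,…,Mⁿ)` is crisscross. -/
theorem stmt1 {k : Type*} [Field k] [CharZero k] (n : ℕ)
    (M : Fin n → Matrix (Fin n) (Fin n) k)
    (d : FreeAlgebra k (Fin n) →ₗ[k] FreeAlgebra k (Fin n))
    (hL : ∀ (p : ℕ) (a b : FreeAlgebra k (Fin n)), a ∈ deg k n p →
      d (a * b) = d a * b + ((-1 : k) ^ p) • (a * d b))
    (hval : ∀ i, d (FreeAlgebra.ι k i) =
      ∑ a : Fin n, ∑ b : Fin n, M i a b • (FreeAlgebra.ι k a * FreeAlgebra.ι k b)) :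
    (∀ x, d (d x) = 0) ↔ crisscross M :=
  stmt1_general n M d hL hval
end

section
/- The DG free algebras B₁ and B₂ on two degree-one generators, whose differentials are given respectively by ∂(x₁) = x₁², ∂(x₂) = x₂x₁ (for B₁) and ∂(y₁) = y₁², ∂(y₂) = y₁y₂ (for B₂), are not isomorphic as DG algebras. -/
/-- the DG free algebras `B₁` (with `∂(x₁) = x₁²`,
`∂(x₂) = x₂x₁`) and `B₂` (with `∂(y₁) = y₁²`, `∂(y₂) = y₁y₂`) on two
degree-one generators are not isomorphic as DG algebras: there is no graded
algebra isomorphism intertwining the two differentials. -/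
theorem stmt6 {k : Type*} [Field k] [CharZero k]
    (d1 d2 : FreeAlgebra k (Fin 2) →ₗ[k] FreeAlgebra k (Fin 2))
    (hL1 : ∀ (p : ℕ) (a b : FreeAlgebra k (Fin 2)), a ∈ deg k 2 p →
      d1 (a * b) = d1 a * b + ((-1 : k) ^ p) • (a * d1 b))
    (hL2 : ∀ (p : ℕ) (a b : FreeAlgebra k (Fin 2)), a ∈ deg k 2 p →
      d2 (a * b) = d2 a * b + ((-1 : k) ^ p) • (a * d2 b))
    (h11 : d1 (FreeAlgebra.ι k 0) = FreeAlgebra.ι k 0 * FreeAlgebra.ι k 0)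
    (h12 : d1 (FreeAlgebra.ι k 1) = FreeAlgebra.ι k 1 * FreeAlgebra.ι k 0)
    (h21 : d2 (FreeAlgebra.ι k 0) = FreeAlgebra.ι k 0 * FreeAlgebra.ι k 0)
    (h22 : d2 (FreeAlgebra.ι k 1) = FreeAlgebra.ι k 0 * FreeAlgebra.ι k 1) :
    ¬ ∃ f : FreeAlgebra k (Fin 2) ≃ₐ[k] FreeAlgebra k (Fin 2),
      (∀ (i : ℕ), ∀ a ∈ deg k 2 i, f a ∈ deg k 2 i) ∧
      (∀ a, f (d1 a) = d2 (f a)) := by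
  rintro ⟨f, hgr, hcomm⟩
  -- generators lie in degree 1
  have hmem : ∀ i : Fin 2, FreeAlgebra.ι k i ∈ deg k 2 1 := fun i =>
    Submodule.subset_span ⟨fun _ => i, by simp⟩
  have hspan : deg k 2 1 ≤ Submodule.span k {FreeAlgebra.ι k 0, FreeAlgebra.ι k 1} := by
    rw [deg]
    apply Submodule.span_le.mpr
    rintro w ⟨g, rfl⟩
    have h : g 0 = 0 ∨ g 0 = 1 := by
      rcases g 0 with ⟨gv, hg⟩
      interval_cases gv
      · left; rfl
      · right; rfl
    rcases h with h | h <;>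
      simp [h, Submodule.mem_span_pair] <;>
      [exact ⟨1, 0, by simp⟩; exact ⟨0, 1, by simp⟩]
  obtain ⟨a, b, hab⟩ := Submodule.mem_span_pair.mp (hspan (hgr 1 _ (hmem 0)))
  obtain ⟨c, e, hce⟩ := Submodule.mem_span_pair.mp (hspan (hgr 1 _ (hmem 1)))
  -- the matrix representation
  set A : Matrix (Fin 2) (Fin 2) k := !![1, 0; 0, 2] with hA
  set B : Matrix (Fin 2) (Fin 2) k := !![0, 1; 1, 0] with hB
  set φ : FreeAlgebra k (Fin 2) →ₐ[k] Matrix (Fin 2) (Fin 2) k :=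
    FreeAlgebra.lift k ![A, B] with hφ
  have φ0 : φ (FreeAlgebra.ι k 0) = A := by simp [hφ]
  have φ1 : φ (FreeAlgebra.ι k 1) = B := by simp [hφ]
  -- first DG equation
  have e1 : (a • A + b • B) * (a • A + b • B) = a • (A * A) + b • (A * B) := by
    have h := hcomm (FreeAlgebra.ι k 0)
    rw [h11, map_mul] at h
    rw [← hab, map_add, map_smul, map_smul, h21, h22] at h
    have h' := congrArg φ h
    simpa [map_mul, map_add, map_smul, φ0, φ1] using h'
  have e1' := fun i j => congrFun (congrFun e1 i) j
  have q00 := e1' 0 0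
  have q01 := e1' 0 1
  have q10 := e1' 1 0
  simp [hA, hB, Matrix.mul_apply, Fin.sum_univ_two, Matrix.smul_apply,
    Matrix.add_apply] at q00 q01 q10
  -- q01 : 3ab = b (roughly), q10 : 3ab = 2b  ⇒ b = 0
  have hb : b = 0 := by linear_combination q01 - q10
  subst hb
  -- second DG equation
  have e2 : (c • A + e • B) * (a • A + (0:k) • B) = c • (A * A) + e • (A * B) := by
    have h := hcomm (FreeAlgebra.ι k 1)
    rw [h12, map_mul, ← hce, ← hab, map_add, map_smul, map_smul, h21, h22] at h
    have h' := congrArg φ h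
    simpa [map_mul, map_add, map_smul, φ0, φ1] using h'
  have e2' := fun i j => congrFun (congrFun e2 i) j
  have r01 := e2' 0 1
  have r10 := e2' 1 0
  simp [hA, hB, Matrix.mul_apply, Fin.sum_univ_two, Matrix.smul_apply,
    Matrix.add_apply] at r01 r10
  have he : e = 0 := by
    rcases r10 with h | h
    · subst h
      linear_combination r01 / 3
    · exact h
  subst he
  -- a ≠ 0
  have ha : a ≠ 0 := by
    intro h0
    subst h0
    have h1 : FreeAlgebra.ι k (0 : Fin 2) = 0 := by
      apply f.injective
      rw [← hab, map_zero]
      simp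
    have h2 := congrArg φ h1
    rw [φ0, map_zero] at h2
    have := congrFun (congrFun h2 0) 0
    simp [hA] at this
  -- f kills a • ι1 - c • ι0, contradiction with injectivity
  have hker : a • FreeAlgebra.ι k (1 : Fin 2) - c • FreeAlgebra.ι k (0 : Fin 2) = 0 := by
    apply f.injective
    rw [map_sub, map_smul, map_smul, ← hab, ← hce, map_zero]
    simp
    module
  have h3 := congrArg φ hker
  rw [map_sub, map_smul, map_smul, φ0, φ1, map_zero] at h3
  have h4 := congrFun (congrFun h3 0) 1
  simp [hA, hB] at h4
  exact ha h4
end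

section
/- The cochain DG algebra B₁ with underlying graded algebra k⟨x₁,x₂⟩ (generators in degree 1) and differential given by ∂(x₁) = x₁², ∂(x₂) = x₂x₁ has trivial cohomology: H⁰(B₁) = k and Hⁱ(B₁) = 0 for all i ≥ 1. -/
open FreeMonoid

namespace FreeAlgebra

variable {R X : Type*} [CommSemiring R]

theorem basisFreeMonoid_apply (w : FreeMonoid X) :
    basisFreeMonoid R X w = FreeMonoid.lift (ι R) w := by
  simp [basisFreeMonoid, equivMonoidAlgebraFreeMonoid]

variable [DecidableEq X]

/-- The coefficient `a_s` in the decomposition `a = c + ∑ s, a_s * ι R s` with `c` a scalar. -/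
noncomputable def rightCoeff (s : X) : FreeAlgebra R X →ₗ[R] FreeAlgebra R X :=
  (basisFreeMonoid R X).constr R fun w =>
    if (toList w).getLast? = some s then basisFreeMonoid R X (ofList (toList w).dropLast) else 0

theorem rightCoeff_mul_ι (s t : X) (a : FreeAlgebra R X) :
    rightCoeff s (a * ι R t) = if t = s then a else 0 := by
  suffices (rightCoeff s).comp (LinearMap.mulRight R (ι R t)) =
      if t = s then LinearMap.id else 0 by
    have := LinearMap.congr_fun this a
    split_ifs at this ⊢ <;> simpa using this
  refine (basisFreeMonoid R X).ext fun w => ?_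
  have hw : basisFreeMonoid R X w * ι R t = basisFreeMonoid R X (w * of t) := by
    simp only [basisFreeMonoid_apply, map_mul, FreeMonoid.lift_eval_of]
  simp only [LinearMap.comp_apply, LinearMap.mulRight_apply, hw, rightCoeff,
    Module.Basis.constr_basis, toList_mul, toList_of, List.getLast?_concat, Option.some.injEq,
    List.dropLast_concat, ofList_toList]
  split_ifs <;> simp

end FreeAlgebra

open FreeAlgebra

theorem prod_ofFn_ι_succ {k : Type*} [CommRing k] {n i : ℕ} (f : Fin (i + 1) → Fin n) :
    (List.ofFn fun j => ι k (f j)).prod =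
      (List.ofFn fun j => ι k (Fin.init f j)).prod * ι k (f (Fin.last i)) := by
  rw [List.ofFn_succ', List.concat_eq_append, List.prod_append, List.prod_singleton]
  rfl

theorem prod_ofFn_ι_mem_deg {k : Type*} [CommRing k] {n i : ℕ} (f : Fin i → Fin n) :
    (List.ofFn fun j => ι k (f j)).prod ∈ deg k n i :=
  Submodule.subset_span ⟨f, rfl⟩

theorem rightCoeff_mem_deg {k : Type*} [CommRing k] {n i : ℕ} (s : Fin n)
    {a : FreeAlgebra k (Fin n)} (ha : a ∈ deg k n (i + 1)) : rightCoeff s a ∈ deg k n i := by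
  refine (Submodule.span_le (p := (deg k n i).comap (rightCoeff s))).mpr ?_ ha
  rintro _ ⟨f, rfl⟩
  rw [SetLike.mem_coe, Submodule.mem_comap, prod_ofFn_ι_succ, rightCoeff_mul_ι]
  split_ifs
  · exact prod_ofFn_ι_mem_deg _
  · exact zero_mem _

theorem map_eq_zero_of_mem_deg_zero {k : Type*} [CommRing k] {n : ℕ}
    (d : FreeAlgebra k (Fin n) →ₗ[k] FreeAlgebra k (Fin n))
    (hL : ∀ (p : ℕ) (a b : FreeAlgebra k (Fin n)), a ∈ deg k n p →
      d (a * b) = d a * b + ((-1 : k) ^ p) • (a * d b))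
    {a : FreeAlgebra k (Fin n)} (ha : a ∈ deg k n 0) : d a = 0 := by
  have hone : (1 : FreeAlgebra k (Fin n)) ∈ deg k n 0 := by
    simpa using prod_ofFn_ι_mem_deg (k := k) (Fin.elim0 : Fin 0 → Fin n)
  have hd1 : d 1 = 0 := by
    simpa using hL 0 1 1 hone
  refine (Submodule.span_le (p := LinearMap.ker d)).mpr ?_ ha
  rintro _ ⟨f, rfl⟩
  simpa using hd1

theorem rightCoeff_zero_map_eq {k : Type*} [CommRing k]
    (d : FreeAlgebra k (Fin 2) →ₗ[k] FreeAlgebra k (Fin 2))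
    (hL : ∀ (p : ℕ) (a b : FreeAlgebra k (Fin 2)), a ∈ deg k 2 p →
      d (a * b) = d a * b + ((-1 : k) ^ p) • (a * d b))
    (h1 : d (ι k 0) = ι k 0 * ι k 0) (h2 : d (ι k 1) = ι k 1 * ι k 0)
    {i : ℕ} {a : FreeAlgebra k (Fin 2)} (ha : a ∈ deg k 2 (i + 1)) :
    rightCoeff 0 (d a) = d (rightCoeff 0 a) + (-1 : k) ^ i • a := by
  refine (Submodule.span_le (p := LinearMap.eqLocus ((rightCoeff 0).comp d)
    (d.comp (rightCoeff 0) + (-1 : k) ^ i • LinearMap.id))).mpr ?_ ha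
  rintro _ ⟨f, rfl⟩
  rw [SetLike.mem_coe, LinearMap.mem_eqLocus, prod_ofFn_ι_succ]
  have hp := hL i _ (ι k (f (Fin.last i))) (prod_ofFn_ι_mem_deg (Fin.init f))
  generalize (List.ofFn fun j => ι k (Fin.init f j)).prod = p at hp ⊢
  generalize f (Fin.last i) = t at hp ⊢
  simp only [LinearMap.comp_apply, LinearMap.add_apply, LinearMap.smul_apply, LinearMap.id_apply,
    hp, map_add, map_smul, rightCoeff_mul_ι]
  fin_cases t
  · simp [h1, ← mul_assoc, rightCoeff_mul_ι]
  · simp [h2, ← mul_assoc, rightCoeff_mul_ι]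

theorem stmt7_general {k : Type*} [Field k]
    (d : FreeAlgebra k (Fin 2) →ₗ[k] FreeAlgebra k (Fin 2))
    (hL : ∀ (p : ℕ) (a b : FreeAlgebra k (Fin 2)), a ∈ deg k 2 p →
      d (a * b) = d a * b + ((-1 : k) ^ p) • (a * d b))
    (h1 : d (FreeAlgebra.ι k 0) = FreeAlgebra.ι k 0 * FreeAlgebra.ι k 0)
    (h2 : d (FreeAlgebra.ι k 1) = FreeAlgebra.ι k 1 * FreeAlgebra.ι k 0) :
    (∀ a ∈ deg k 2 0, d a = 0) ∧
    (∀ i : ℕ, 1 ≤ i → ∀ a ∈ deg k 2 i, d a = 0 →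
      ∃ b ∈ deg k 2 (i - 1), d b = a) := by
  refine ⟨fun a ha => map_eq_zero_of_mem_deg_zero d hL ha, ?_⟩
  rintro (_ | i) hi a ha hda
  · omega
  have key := rightCoeff_zero_map_eq d hL h1 h2 ha
  rw [hda, map_zero, eq_comm, add_eq_zero_iff_eq_neg] at key
  refine ⟨(-1 : k) ^ (i + 1) • rightCoeff 0 a,
    (deg k 2 i).smul_mem _ (rightCoeff_mem_deg 0 ha), ?_⟩
  have hodd : (-1 : k) ^ (i + 1 + i) = -1 := Odd.neg_one_pow ⟨i, by ring⟩
  rw [map_smul, key, smul_neg, smul_smul, ← pow_add, hodd, neg_one_smul, neg_neg]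

/-- the cochain DG algebra `B₁` with underlying graded algebra
`k⟨x₁,x₂⟩` (generators in degree 1) and differential `∂(x₁) = x₁²`,
`∂(x₂) = x₂x₁` has trivial cohomology: `H⁰(B₁) = k` (every degree-0 element is
a cocycle, and nothing maps into degree 0) and `Hⁱ(B₁) = 0` for `i ≥ 1`. -/
theorem stmt7 {k : Type*} [Field k] [CharZero k]
    (d : FreeAlgebra k (Fin 2) →ₗ[k] FreeAlgebra k (Fin 2))
    (hL : ∀ (p : ℕ) (a b : FreeAlgebra k (Fin 2)), a ∈ deg k 2 p →
      d (a * b) = d a * b + ((-1 : k) ^ p) • (a * d b))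
    (h1 : d (FreeAlgebra.ι k 0) = FreeAlgebra.ι k 0 * FreeAlgebra.ι k 0)
    (h2 : d (FreeAlgebra.ι k 1) = FreeAlgebra.ι k 1 * FreeAlgebra.ι k 0)
    (hdd : ∀ x, d (d x) = 0) :
    (∀ a ∈ deg k 2 0, d a = 0) ∧
    (∀ i : ℕ, 1 ≤ i → ∀ a ∈ deg k 2 i, d a = 0 →
      ∃ b ∈ deg k 2 (i - 1), d b = a) :=
  stmt7_general d hL h1 h2
end

section
/- The cochain DG algebra B₆ with underlying graded algebra k⟨x₁,x₂⟩ (generators in degree 1) and differential given by ∂(x₁) = x₂², ∂(x₂) = 0 has cohomology: H⁰ = k, H^{2n−1}(B₆) = k·⌈x₂(x₁x₂+x₂x₁)^{n−1}⌉ and H^{2n}(B₆) = k·⌈(x₁x₂+x₂x₁)^n⌉ for all n ≥ 1; moreover the classes of x₂ and of x₁x₂+x₂x₁ commute in H(B₆), and H(B₆) ≅ k[⌈x₂⌉, ⌈x₁x₂+x₂x₁⌉]/(⌈x₂⌉²). -/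
/-- The first generator `x₁`. -/
noncomputable def X (k : Type*) [CommRing k] : FreeAlgebra k (Fin 2) := FreeAlgebra.ι k 0

/-- The second generator `x₂`. -/
noncomputable def Y (k : Type*) [CommRing k] : FreeAlgebra k (Fin 2) := FreeAlgebra.ι k 1

/-- The degree-2 cocycle `x₁x₂ + x₂x₁` of `B₆`. -/
noncomputable def Q (k : Type*) [CommRing k] : FreeAlgebra k (Fin 2) := X k * Y k + Y k * X k

namespace FreeAlgebra

variable {R : Type*} [CommRing R] {α : Type*}

theorem ι_mul_add_ι_mul_inj {i j : α} (hij : i ≠ j) {u v u' v' : FreeAlgebra R α}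
    (h : ι R i * u + ι R j * v = ι R i * u' + ι R j * v') : u = u' ∧ v = v' := by
  let e : FreeAlgebra R α ≃ₐ[R] MonoidAlgebra R (FreeMonoid α) := equivMonoidAlgebraFreeMonoid
  have e_ι (l : α) : e (ι R l) = MonoidAlgebra.single (FreeMonoid.of l) 1 := by
    simp [e, equivMonoidAlgebraFreeMonoid, MonoidAlgebra.of_apply]
  -- the coefficient of the word `l w` only sees the summand starting with `l`
  have coeff_of_mul {l l' : α} (hl : l ≠ l') (a b : FreeAlgebra R α) (w : FreeMonoid α) :
      (e (ι R l * a + ι R l' * b)).coeff (FreeMonoid.of l * w) = (e a).coeff w := by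
    rw [map_add e, map_mul e, map_mul e, e_ι, e_ι, MonoidAlgebra.coeff_add, Finsupp.add_apply,
      MonoidAlgebra.coeff_single_mul_mul, one_mul,
      MonoidAlgebra.coeff_single_mul_of_forall_mul_ne, add_zero]
    intro w' hw'
    exact hl (List.head_eq_of_cons_eq (congrArg FreeMonoid.toList hw')).symm
  have h' : ι R j * v + ι R i * u = ι R j * v' + ι R i * u' := by rwa [add_comm, add_comm (_ * v')]
  refine ⟨e.injective (MonoidAlgebra.ext <| Finsupp.ext fun w => ?_),
    e.injective (MonoidAlgebra.ext <| Finsupp.ext fun w => ?_)⟩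
  · rw [← coeff_of_mul hij u v, h, coeff_of_mul hij]
  · rw [← coeff_of_mul hij.symm v u, h', coeff_of_mul hij.symm]

end FreeAlgebra

section Degree

variable {R : Type*} [CommRing R] {n : ℕ}

theorem one_mem_deg_zero : (1 : FreeAlgebra R (Fin n)) ∈ deg R n 0 :=
  Submodule.subset_span ⟨Fin.elim0, by simp⟩

theorem exists_eq_smul_one_of_mem_deg_zero {a : FreeAlgebra R (Fin n)} (ha : a ∈ deg R n 0) :
    ∃ c : R, a = c • 1 := by
  have hle : deg R n 0 ≤ R ∙ (1 : FreeAlgebra R (Fin n)) := by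
    rw [deg, Submodule.span_le]
    rintro _ ⟨f, rfl⟩
    simp
  obtain ⟨c, hc⟩ := Submodule.mem_span_singleton.mp (hle ha)
  exact ⟨c, hc.symm⟩

theorem ι_mem_deg_one (i : Fin n) : FreeAlgebra.ι R i ∈ deg R n 1 :=
  Submodule.subset_span ⟨fun _ => i, by simp⟩

theorem mul_mem_deg {p q : ℕ} {a b : FreeAlgebra R (Fin n)} (ha : a ∈ deg R n p)
    (hb : b ∈ deg R n q) : a * b ∈ deg R n (p + q) := by
  have hle : deg R n p * deg R n q ≤ deg R n (p + q) := by
    rw [deg, deg, Submodule.span_mul_span]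
    apply Submodule.span_mono
    rintro _ ⟨_, ⟨f, rfl⟩, _, ⟨g, rfl⟩, rfl⟩
    exact ⟨Fin.append f g, by simp [List.ofFn_add, List.prod_append]⟩
  exact hle (Submodule.mul_mem_mul ha hb)

theorem ι_mul_mem_deg_succ (i : Fin n) {m : ℕ} {a : FreeAlgebra R (Fin n)} (ha : a ∈ deg R n m) :
    FreeAlgebra.ι R i * a ∈ deg R n (m + 1) := by
  simpa only [add_comm] using mul_mem_deg (ι_mem_deg_one i) ha

end Degree

section TwoGenerators

variable {R : Type*} [CommRing R]

theorem X_mul_mem_deg_succ {m : ℕ} {a : FreeAlgebra R (Fin 2)} (ha : a ∈ deg R 2 m) :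
    X R * a ∈ deg R 2 (m + 1) :=
  ι_mul_mem_deg_succ 0 ha

theorem Y_mul_mem_deg_succ {m : ℕ} {a : FreeAlgebra R (Fin 2)} (ha : a ∈ deg R 2 m) :
    Y R * a ∈ deg R 2 (m + 1) :=
  ι_mul_mem_deg_succ 1 ha

theorem exists_X_mul_add_Y_mul_of_mem_deg_succ {m : ℕ} {a : FreeAlgebra R (Fin 2)}
    (ha : a ∈ deg R 2 (m + 1)) : ∃ u ∈ deg R 2 m, ∃ v ∈ deg R 2 m, a = X R * u + Y R * v := by
  have hle : deg R 2 (m + 1) ≤ (deg R 2 m).map (LinearMap.mulLeft R (X R)) ⊔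
      (deg R 2 m).map (LinearMap.mulLeft R (Y R)) := by
    rw [deg, Submodule.span_le]
    rintro _ ⟨f, rfl⟩
    have htail : (List.ofFn fun j : Fin m => FreeAlgebra.ι R (f j.succ)).prod ∈ deg R 2 m :=
      Submodule.subset_span ⟨_, rfl⟩
    rw [SetLike.mem_coe, List.ofFn_succ, List.prod_cons]
    match f 0 with
    | 0 => exact Submodule.mem_sup_left ⟨_, htail, rfl⟩
    | 1 => exact Submodule.mem_sup_right ⟨_, htail, rfl⟩
  obtain ⟨_, ⟨u, hu, rfl⟩, _, ⟨v, hv, rfl⟩, rfl⟩ := Submodule.mem_sup.mp (hle ha)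
  exact ⟨u, hu, v, hv, rfl⟩

theorem X_mul_add_Y_mul_inj {u v u' v' : FreeAlgebra R (Fin 2)}
    (h : X R * u + Y R * v = X R * u' + Y R * v') : u = u' ∧ v = v' :=
  FreeAlgebra.ι_mul_add_ι_mul_inj (by decide) h

theorem eq_zero_of_smul_Y_eq_zero {c : R} (h : c • Y R = 0) : c = 0 := by
  have h' : X R * 0 + Y R * algebraMap R _ c = X R * 0 + Y R * algebraMap R _ 0 := by
    simp only [map_zero, mul_zero, zero_add]
    rw [← Algebra.commutes, ← Algebra.smul_def, h]
  exact (FreeAlgebra.algebraMap_inj c 0).mp (X_mul_add_Y_mul_inj h').2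

theorem Q_pow_succ (m : ℕ) : Q R ^ (m + 1) = X R * (Y R * Q R ^ m) + Y R * (X R * Q R ^ m) := by
  rw [pow_succ', Q, add_mul, mul_assoc, mul_assoc]

theorem Q_pow_mem_deg (m : ℕ) : Q R ^ m ∈ deg R 2 (2 * m) := by
  induction m with
  | zero => exact one_mem_deg_zero
  | succ m ih =>
    rw [Q_pow_succ]
    exact Submodule.add_mem _ (X_mul_mem_deg_succ (Y_mul_mem_deg_succ ih))
      (Y_mul_mem_deg_succ (X_mul_mem_deg_succ ih))

theorem X_mul_Q_pow_mem_deg (m : ℕ) : X R * Q R ^ m ∈ deg R 2 (2 * m + 1) :=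
  X_mul_mem_deg_succ (Q_pow_mem_deg m)

theorem Y_mul_Q_pow_mem_deg (m : ℕ) : Y R * Q R ^ m ∈ deg R 2 (2 * m + 1) :=
  Y_mul_mem_deg_succ (Q_pow_mem_deg m)

end TwoGenerators

section B6

variable {R : Type*} [CommRing R]

structure IsB6Differential (d : FreeAlgebra R (Fin 2) →ₗ[R] FreeAlgebra R (Fin 2)) : Prop where
  leibniz : ∀ (p : ℕ) (a b : FreeAlgebra R (Fin 2)), a ∈ deg R 2 p →
    d (a * b) = d a * b + ((-1 : R) ^ p) • (a * d b)
  map_X : d (X R) = Y R * Y R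
  map_Y : d (Y R) = 0

def CocyclesSpannedBy (d : FreeAlgebra R (Fin 2) →ₗ[R] FreeAlgebra R (Fin 2)) (n : ℕ)
    (g : FreeAlgebra R (Fin 2)) : Prop :=
  ∀ a ∈ deg R 2 (n + 1), d a = 0 → ∃ c : R, ∃ b ∈ deg R 2 n, a = c • g + d b

namespace IsB6Differential

variable {d : FreeAlgebra R (Fin 2) →ₗ[R] FreeAlgebra R (Fin 2)} (hd : IsB6Differential d)
include hd

theorem map_one : d 1 = 0 := by
  simpa using hd.leibniz 0 1 1 one_mem_deg_zero

theorem map_eq_zero_of_mem_deg_zero {a : FreeAlgebra R (Fin 2)} (ha : a ∈ deg R 2 0) :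
    d a = 0 := by
  obtain ⟨c, rfl⟩ := exists_eq_smul_one_of_mem_deg_zero ha
  rw [map_smul, hd.map_one, smul_zero]

theorem map_X_mul (u : FreeAlgebra R (Fin 2)) : d (X R * u) = Y R * (Y R * u) - X R * d u := by
  rw [hd.leibniz 1 (X R) u (ι_mem_deg_one 0), hd.map_X]
  simp [sub_eq_add_neg, mul_assoc]

theorem map_Y_mul (u : FreeAlgebra R (Fin 2)) : d (Y R * u) = -(Y R * d u) := by
  rw [hd.leibniz 1 (Y R) u (ι_mem_deg_one 1), hd.map_Y]
  simp

theorem map_X_mul_add_Y_mul (u v : FreeAlgebra R (Fin 2)) :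
    d (X R * u + Y R * v) = X R * -d u + Y R * (Y R * u - d v) := by
  rw [map_add, hd.map_X_mul, hd.map_Y_mul]
  noncomm_ring

theorem map_X_mul_add_Y_mul_eq_zero_iff {u v : FreeAlgebra R (Fin 2)} :
    d (X R * u + Y R * v) = 0 ↔ d u = 0 ∧ d v = Y R * u := by
  rw [hd.map_X_mul_add_Y_mul]
  constructor
  · intro h
    obtain ⟨hu, hv⟩ := X_mul_add_Y_mul_inj (h.trans (by simp : 0 = X R * 0 + Y R * 0))
    exact ⟨neg_eq_zero.mp hu, (sub_eq_zero.mp hv).symm⟩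
  · rintro ⟨hu, hv⟩
    rw [hu, hv, neg_zero, sub_self, mul_zero, mul_zero, add_zero]

theorem map_Q_pow (m : ℕ) : d (Q R ^ m) = 0 := by
  induction m with
  | zero => exact hd.map_one
  | succ m ih =>
    rw [Q_pow_succ, hd.map_X_mul_add_Y_mul, hd.map_Y_mul, hd.map_X_mul, ih]
    noncomm_ring

theorem map_X_mul_Q_pow (m : ℕ) : d (X R * Q R ^ m) = Y R * (Y R * Q R ^ m) := by
  rw [hd.map_X_mul, hd.map_Q_pow, mul_zero, sub_zero]

theorem map_Y_mul_Q_pow (m : ℕ) : d (Y R * Q R ^ m) = 0 := by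
  rw [hd.map_Y_mul, hd.map_Q_pow, mul_zero, neg_zero]

theorem eq_zero_of_map_eq_smul_Y_mul_Q_pow {c : R} (m : ℕ) {b : FreeAlgebra R (Fin 2)}
    (hb : b ∈ deg R 2 (2 * m)) (hdb : d b = c • (Y R * Q R ^ m)) : c = 0 := by
  induction m generalizing b with
  | zero =>
    rw [hd.map_eq_zero_of_mem_deg_zero hb, pow_zero, mul_one] at hdb
    exact eq_zero_of_smul_Y_eq_zero hdb.symm
  | succ m ih =>
    obtain ⟨s, -, t, ht, rfl⟩ := exists_X_mul_add_Y_mul_of_mem_deg_succ hb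
    obtain ⟨t₁, ht₁, t₂, -, rfl⟩ := exists_X_mul_add_Y_mul_of_mem_deg_succ ht
    rw [hd.map_X_mul_add_Y_mul] at hdb
    have hY := (X_mul_add_Y_mul_inj (hdb.trans
      (by simp : c • (Y R * Q R ^ (m + 1)) = X R * 0 + Y R * c • Q R ^ (m + 1)))).2
    have hX : X R * d t₁ + Y R * (s - Y R * t₁ + d t₂) =
        X R * c • (Y R * Q R ^ m) + Y R * c • (X R * Q R ^ m) := by
      rw [mul_smul_comm, mul_smul_comm, ← smul_add, ← Q_pow_succ, ← hY, hd.map_X_mul_add_Y_mul]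
      noncomm_ring
    exact ih ht₁ (X_mul_add_Y_mul_inj hX).1

theorem eq_zero_of_map_eq_smul_Q_pow_succ {c : R} (m : ℕ) {b : FreeAlgebra R (Fin 2)}
    (hb : b ∈ deg R 2 (2 * m + 1)) (hdb : d b = c • Q R ^ (m + 1)) : c = 0 := by
  obtain ⟨s, hs, t, -, rfl⟩ := exists_X_mul_add_Y_mul_of_mem_deg_succ hb
  have h : X R * -d s + Y R * (Y R * s - d t) =
      X R * c • (Y R * Q R ^ m) + Y R * c • (X R * Q R ^ m) := by
    rw [← hd.map_X_mul_add_Y_mul, hdb, mul_smul_comm, mul_smul_comm, ← smul_add, ← Q_pow_succ]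
  refine hd.eq_zero_of_map_eq_smul_Y_mul_Q_pow m (neg_mem hs) ?_
  rw [map_neg]
  exact (X_mul_add_Y_mul_inj h).1

theorem cocyclesSpannedBy_Q_pow_succ (m : ℕ) (hodd : CocyclesSpannedBy d (2 * m) (Y R * Q R ^ m)) :
    CocyclesSpannedBy d (2 * m + 1) (Q R ^ (m + 1)) := by
  intro a ha hda
  obtain ⟨u, hu, v, hv, rfl⟩ := exists_X_mul_add_Y_mul_of_mem_deg_succ ha
  obtain ⟨hdu, hdv⟩ := hd.map_X_mul_add_Y_mul_eq_zero_iff.mp hda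
  obtain ⟨c, s, hs, rfl⟩ := hodd u hu hdu
  set w := v - c • (X R * Q R ^ m) + Y R * s with hw_def
  have hw : w ∈ deg R 2 (2 * m + 1) :=
    add_mem (sub_mem hv (Submodule.smul_mem _ c (X_mul_Q_pow_mem_deg m))) (Y_mul_mem_deg_succ hs)
  have hdw : d w = 0 := by
    rw [hw_def, map_add, map_sub, map_smul, hdv, hd.map_X_mul_Q_pow, hd.map_Y_mul, mul_add,
      mul_smul_comm]
    abel
  obtain ⟨c', t, ht, hwt⟩ := hodd w hw hdw
  refine ⟨c, -(X R * s) + c' • (X R * Q R ^ m) - Y R * t,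
    sub_mem (add_mem (neg_mem (X_mul_mem_deg_succ hs))
      (Submodule.smul_mem _ c' (X_mul_Q_pow_mem_deg m))) (Y_mul_mem_deg_succ ht), ?_⟩
  have hdt : d t = w - c' • (Y R * Q R ^ m) := by rw [hwt]; abel
  rw [map_sub, map_add, map_neg, map_smul, hd.map_X_mul, hd.map_X_mul_Q_pow, hd.map_Y_mul, hdt,
    hw_def, Q_pow_succ]
  simp only [mul_add, mul_sub, mul_smul_comm, smul_add]
  abel

theorem cocyclesSpannedBy_Y_mul_Q_pow (m : ℕ) : CocyclesSpannedBy d (2 * m) (Y R * Q R ^ m) := by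
  induction m with
  | zero =>
    intro a ha hda
    obtain ⟨u, hu, v, hv, rfl⟩ := exists_X_mul_add_Y_mul_of_mem_deg_succ ha
    obtain ⟨-, hdv⟩ := hd.map_X_mul_add_Y_mul_eq_zero_iff.mp hda
    obtain ⟨α, rfl⟩ := exists_eq_smul_one_of_mem_deg_zero hu
    obtain ⟨β, rfl⟩ := exists_eq_smul_one_of_mem_deg_zero hv
    have hα : α = 0 := eq_zero_of_smul_Y_eq_zero <| by
      rw [← mul_one (Y R), ← mul_smul_comm, ← hdv, hd.map_eq_zero_of_mem_deg_zero hv]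
    refine ⟨β, 0, zero_mem _, ?_⟩
    simp [hα]
  | succ m ih =>
    have heven := hd.cocyclesSpannedBy_Q_pow_succ m ih
    intro a ha hda
    obtain ⟨u, hu, v, hv, rfl⟩ := exists_X_mul_add_Y_mul_of_mem_deg_succ ha
    obtain ⟨hdu, hdv⟩ := hd.map_X_mul_add_Y_mul_eq_zero_iff.mp hda
    obtain ⟨c, s, hs, rfl⟩ := heven u hu hdu
    have hw : v + Y R * s ∈ deg R 2 (2 * (m + 1)) := add_mem hv (Y_mul_mem_deg_succ hs)
    have hdw : d (v + Y R * s) = c • (Y R * Q R ^ (m + 1)) := by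
      rw [map_add, hd.map_Y_mul, hdv, mul_add, mul_smul_comm]
      abel
    obtain rfl := hd.eq_zero_of_map_eq_smul_Y_mul_Q_pow (m + 1) hw hdw
    obtain ⟨c', t, ht, hwt⟩ := heven _ hw (by rw [hdw, zero_smul])
    refine ⟨c', -(X R * s) - Y R * t,
      sub_mem (neg_mem (X_mul_mem_deg_succ hs)) (Y_mul_mem_deg_succ ht), ?_⟩
    have hdt : d t = v + Y R * s - c' • Q R ^ (m + 1) := by rw [hwt]; abel
    rw [map_sub, map_neg, hd.map_X_mul, hd.map_Y_mul, hdt, zero_smul, zero_add]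
    simp only [mul_add, mul_sub, mul_smul_comm]
    abel

end IsB6Differential

end B6

theorem stmt11_general {k : Type*} [Field k]
    (d : FreeAlgebra k (Fin 2) →ₗ[k] FreeAlgebra k (Fin 2))
    (hL : ∀ (p : ℕ) (a b : FreeAlgebra k (Fin 2)), a ∈ deg k 2 p →
      d (a * b) = d a * b + ((-1 : k) ^ p) • (a * d b))
    (h1 : d (X k) = Y k * Y k)
    (h2 : d (Y k) = 0) :
    (∀ a ∈ deg k 2 0, d a = 0) ∧
    (∀ n : ℕ, 1 ≤ n →
      (Y k * (Q k) ^ (n - 1) ∈ deg k 2 (2 * n - 1) ∧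
        d (Y k * (Q k) ^ (n - 1)) = 0 ∧
        (¬ ∃ b ∈ deg k 2 (2 * n - 2), d b = Y k * (Q k) ^ (n - 1)) ∧
        (∀ a ∈ deg k 2 (2 * n - 1), d a = 0 →
          ∃ c : k, ∃ b ∈ deg k 2 (2 * n - 2),
            a = c • (Y k * (Q k) ^ (n - 1)) + d b)) ∧
      ((Q k) ^ n ∈ deg k 2 (2 * n) ∧
        d ((Q k) ^ n) = 0 ∧
        (¬ ∃ b ∈ deg k 2 (2 * n - 1), d b = (Q k) ^ n) ∧
        (∀ a ∈ deg k 2 (2 * n), d a = 0 →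
          ∃ c : k, ∃ b ∈ deg k 2 (2 * n - 1), a = c • (Q k) ^ n + d b))) ∧
    (Y k * Q k - Q k * Y k = d (X k * X k)) ∧
    (Y k * Y k = d (X k)) := by
  have hd : IsB6Differential d := ⟨hL, h1, h2⟩
  refine ⟨fun a ha => hd.map_eq_zero_of_mem_deg_zero ha, fun n hn => ?_, ?_, h1.symm⟩
  · obtain ⟨m, rfl⟩ := Nat.exists_eq_add_of_le' hn
    rw [show 2 * (m + 1) - 1 = 2 * m + 1 by omega, show 2 * (m + 1) - 2 = 2 * m by omega,
      Nat.add_sub_cancel]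
    have hodd := hd.cocyclesSpannedBy_Y_mul_Q_pow m
    refine ⟨⟨Y_mul_Q_pow_mem_deg m, hd.map_Y_mul_Q_pow m, ?_, hodd⟩,
      ⟨Q_pow_mem_deg (m + 1), hd.map_Q_pow (m + 1), ?_, hd.cocyclesSpannedBy_Q_pow_succ m hodd⟩⟩
    · rintro ⟨b, hb, hdb⟩
      exact one_ne_zero (hd.eq_zero_of_map_eq_smul_Y_mul_Q_pow m hb (by rw [hdb, one_smul]))
    · rintro ⟨b, hb, hdb⟩
      exact one_ne_zero (hd.eq_zero_of_map_eq_smul_Q_pow_succ m hb (by rw [hdb, one_smul]))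
  · rw [hd.map_X_mul, h1, Q]
    noncomm_ring

/-- the cochain DG algebra `B₆` on `k⟨x₁,x₂⟩` with
`∂(x₁) = x₂²`, `∂(x₂) = 0` has cohomology `H⁰ = k`,
`H^{2n−1} = k·⌈x₂(x₁x₂+x₂x₁)^{n−1}⌉` and `H^{2n} = k·⌈(x₁x₂+x₂x₁)^n⌉`
for `n ≥ 1`; moreover the classes of `x₂` and of `x₁x₂+x₂x₁` commute in
`H(B₆)` (indeed `x₂q − qx₂ = ∂(x₁²)`) and `⌈x₂⌉² = 0` (indeed `x₂² = ∂x₁`),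
so `H(B₆) ≅ k[⌈x₂⌉, ⌈x₁x₂+x₂x₁⌉]/(⌈x₂⌉²)`. -/
theorem stmt11 {k : Type*} [Field k] [CharZero k]
    (d : FreeAlgebra k (Fin 2) →ₗ[k] FreeAlgebra k (Fin 2))
    (hL : ∀ (p : ℕ) (a b : FreeAlgebra k (Fin 2)), a ∈ deg k 2 p →
      d (a * b) = d a * b + ((-1 : k) ^ p) • (a * d b))
    (h1 : d (X k) = Y k * Y k)
    (h2 : d (Y k) = 0)
    (hdd : ∀ x, d (d x) = 0) :
    (∀ a ∈ deg k 2 0, d a = 0) ∧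
    (∀ n : ℕ, 1 ≤ n →
      (Y k * (Q k) ^ (n - 1) ∈ deg k 2 (2 * n - 1) ∧
        d (Y k * (Q k) ^ (n - 1)) = 0 ∧
        (¬ ∃ b ∈ deg k 2 (2 * n - 2), d b = Y k * (Q k) ^ (n - 1)) ∧
        (∀ a ∈ deg k 2 (2 * n - 1), d a = 0 →
          ∃ c : k, ∃ b ∈ deg k 2 (2 * n - 2),
            a = c • (Y k * (Q k) ^ (n - 1)) + d b)) ∧
      ((Q k) ^ n ∈ deg k 2 (2 * n) ∧
        d ((Q k) ^ n) = 0 ∧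
        (¬ ∃ b ∈ deg k 2 (2 * n - 1), d b = (Q k) ^ n) ∧
        (∀ a ∈ deg k 2 (2 * n), d a = 0 →
          ∃ c : k, ∃ b ∈ deg k 2 (2 * n - 1), a = c • (Q k) ^ n + d b))) ∧
    (Y k * Q k - Q k * Y k = d (X k * X k)) ∧
    (Y k * Y k = d (X k)) :=
  stmt11_general d hL h1 h2
end

section
/- The DG free algebra B(−1,−1) (defined by the symmetric crisscross pair N¹ = N² = [[−1,1],[1,−1]]) is isomorphic to B₆ (defined by M¹ = [[0,0],[0,1]], M² = 0): the matrix A = [[−1,0],[1,−1]] ∈ GL₂(k) satisfies −N¹ + 0·N² = AᵀM¹A and N¹ − N² = AᵀM²A. -/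
open Matrix

namespace Stmt15Aux

variable (k : Type*) [CommRing k] (n : ℕ)

/-- `deg` as a span of words given by lists. -/
lemma deg_eq (i : ℕ) :
    deg k n i = Submodule.span k
      {w | ∃ l : List (Fin n), l.length = i ∧ w = (l.map (FreeAlgebra.ι k)).prod} := by
  unfold deg
  congr 1
  ext w
  constructor
  · rintro ⟨f, rfl⟩
    refine ⟨List.ofFn f, by simp, ?_⟩
    rw [List.map_ofFn]
    rfl
  · rintro ⟨l, hl, rfl⟩
    subst hl
    refine ⟨l.get, ?_⟩
    rw [show (List.ofFn fun j => FreeAlgebra.ι k (l.get j)) =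
      List.map (FreeAlgebra.ι k) (List.ofFn l.get) by rw [List.map_ofFn]; rfl,
      List.ofFn_get]

lemma word_mem_deg (l : List (Fin n)) :
    (l.map (FreeAlgebra.ι k)).prod ∈ deg k n l.length := by
  rw [deg_eq]
  exact Submodule.subset_span ⟨l, rfl, rfl⟩

lemma one_mem_deg : (1 : FreeAlgebra k (Fin n)) ∈ deg k n 0 :=
  word_mem_deg k n []

lemma ι_mem_deg_one (x : Fin n) : FreeAlgebra.ι k x ∈ deg k n 1 := by
  have := word_mem_deg k n [x]
  simpa using this

lemma mul_mem_deg {p q : ℕ} {a b : FreeAlgebra k (Fin n)}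
    (ha : a ∈ deg k n p) (hb : b ∈ deg k n q) : a * b ∈ deg k n (p + q) := by
  rw [deg_eq] at ha hb ⊢
  have h := Submodule.mul_mem_mul ha hb
  rw [Submodule.span_mul_span] at h
  refine Submodule.span_le.mpr ?_ h
  rintro _ ⟨u, ⟨l1, rfl, rfl⟩, v, ⟨l2, rfl, rfl⟩, rfl⟩
  exact Submodule.subset_span ⟨l1 ++ l2, by simp, by simp⟩

/-- the span of all words is everything -/
lemma mem_span_words (a : FreeAlgebra k (Fin n)) :
    a ∈ Submodule.span k {w : FreeAlgebra k (Fin n) |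
      ∃ l : List (Fin n), w = (l.map (FreeAlgebra.ι k)).prod} := by
  induction a using FreeAlgebra.induction with
  | grade0 r =>
      rw [Algebra.algebraMap_eq_smul_one]
      exact Submodule.smul_mem _ _ (Submodule.subset_span ⟨[], by simp⟩)
  | grade1 x => exact Submodule.subset_span ⟨[x], by simp⟩
  | mul a b ha hb =>
      have h := Submodule.mul_mem_mul ha hb
      rw [Submodule.span_mul_span] at h
      refine Submodule.span_le.mpr ?_ h
      rintro _ ⟨u, ⟨l1, rfl⟩, v, ⟨l2, rfl⟩, rfl⟩
      exact Submodule.subset_span ⟨l1 ++ l2, by simp⟩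
  | add a b ha hb => exact Submodule.add_mem _ ha hb


end Stmt15Aux

/-- the DG free algebra `B(−1,−1)` (defined by
`N¹ = N² = [[−1,1],[1,−1]]`) is isomorphic to `B₆` (defined by
`M¹ = [[0,0],[0,1]]`, `M² = 0`): the matrix `A = [[−1,0],[1,−1]]` is
invertible and satisfies `−N¹ + 0·N² = AᵀM¹A` and `N¹ − N² = AᵀM²A`, and
there is a DG algebra isomorphism. -/
theorem stmt15 {k : Type*} [Field k] [CharZero k]
    (dM dN : FreeAlgebra k (Fin 2) →ₗ[k] FreeAlgebra k (Fin 2))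
    (hLM : ∀ (p : ℕ) (a b : FreeAlgebra k (Fin 2)), a ∈ deg k 2 p →
      dM (a * b) = dM a * b + ((-1 : k) ^ p) • (a * dM b))
    (hLN : ∀ (p : ℕ) (a b : FreeAlgebra k (Fin 2)), a ∈ deg k 2 p →
      dN (a * b) = dN a * b + ((-1 : k) ^ p) • (a * dN b))
    (hM1 : dM (FreeAlgebra.ι k 0) = FreeAlgebra.ι k 1 * FreeAlgebra.ι k 1)
    (hM2 : dM (FreeAlgebra.ι k 1) = 0)
    (hN1 : dN (FreeAlgebra.ι k 0) =
      -(FreeAlgebra.ι k 0 * FreeAlgebra.ι k 0)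
        + FreeAlgebra.ι k 0 * FreeAlgebra.ι k 1
        + FreeAlgebra.ι k 1 * FreeAlgebra.ι k 0
        - FreeAlgebra.ι k 1 * FreeAlgebra.ι k 1)
    (hN2 : dN (FreeAlgebra.ι k 1) =
      -(FreeAlgebra.ι k 0 * FreeAlgebra.ι k 0)
        + FreeAlgebra.ι k 0 * FreeAlgebra.ι k 1
        + FreeAlgebra.ι k 1 * FreeAlgebra.ι k 0
        - FreeAlgebra.ι k 1 * FreeAlgebra.ι k 1) :
    IsUnit (!![(-1 : k), 0; 1, -1] : Matrix (Fin 2) (Fin 2) k).det ∧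
    (-(!![(-1 : k), 1; 1, -1]) + (0 : k) • !![(-1 : k), 1; 1, -1] =
      (!![(-1 : k), 0; 1, -1])ᵀ * !![(0 : k), 0; 0, 1] * !![(-1 : k), 0; 1, -1]) ∧
    ((!![(-1 : k), 1; 1, -1]) - (!![(-1 : k), 1; 1, -1]) =
      (!![(-1 : k), 0; 1, -1])ᵀ * (0 : Matrix (Fin 2) (Fin 2) k) * !![(-1 : k), 0; 1, -1]) ∧
    (∃ f : FreeAlgebra k (Fin 2) ≃ₐ[k] FreeAlgebra k (Fin 2),
      (∀ (i : ℕ), ∀ a ∈ deg k 2 i, f a ∈ deg k 2 i) ∧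
      (∀ a, f (dM a) = dN (f a))) := by
  open Stmt15Aux in
  refine ⟨?_, ?_, ?_, ?_⟩
  · simp [Matrix.det_fin_two_of]
  · rw [show (!![(-1 : k), 0; 1, -1])ᵀ = !![(-1 : k), 1; 0, -1] by
      ext i j; fin_cases i <;> fin_cases j <;> rfl]
    norm_num [Matrix.mul_fin_two]
  · simp
  · -- construct the isomorphism
    have x0d : FreeAlgebra.ι k (0:Fin 2) = FreeAlgebra.ι k 0 := rfl
    set φ : FreeAlgebra k (Fin 2) →ₐ[k] FreeAlgebra k (Fin 2) :=
      FreeAlgebra.lift k ![-(FreeAlgebra.ι k 0), FreeAlgebra.ι k 0 - FreeAlgebra.ι k 1] with hφ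
    set ψ : FreeAlgebra k (Fin 2) →ₐ[k] FreeAlgebra k (Fin 2) :=
      FreeAlgebra.lift k ![-(FreeAlgebra.ι k 0), -(FreeAlgebra.ι k 0) - FreeAlgebra.ι k 1] with hψ
    have hφ0 : φ (FreeAlgebra.ι k 0) = -(FreeAlgebra.ι k 0) := by
      rw [hφ]; rw [FreeAlgebra.lift_ι_apply]; rfl
    have hφ1 : φ (FreeAlgebra.ι k 1) = FreeAlgebra.ι k 0 - FreeAlgebra.ι k 1 := by
      rw [hφ]; rw [FreeAlgebra.lift_ι_apply]; rfl
    have hψ0 : ψ (FreeAlgebra.ι k 0) = -(FreeAlgebra.ι k 0) := by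
      rw [hψ]; rw [FreeAlgebra.lift_ι_apply]; rfl
    have hψ1 : ψ (FreeAlgebra.ι k 1) = -(FreeAlgebra.ι k 0) - FreeAlgebra.ι k 1 := by
      rw [hψ]; rw [FreeAlgebra.lift_ι_apply]; rfl
    have hφψ : φ.comp ψ = AlgHom.id k _ := by
      apply FreeAlgebra.hom_ext
      funext x
      fin_cases x <;>
        simp [hψ0, hψ1, hφ0, hφ1, map_neg, map_sub]
    have hψφ : ψ.comp φ = AlgHom.id k _ := by
      apply FreeAlgebra.hom_ext
      funext x
      fin_cases x <;>
        simp [hψ0, hψ1, hφ0, hφ1, map_neg, map_sub]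
    set f : FreeAlgebra k (Fin 2) ≃ₐ[k] FreeAlgebra k (Fin 2) :=
      AlgEquiv.ofAlgHom φ ψ hφψ hψφ with hf
    have hfeq : ∀ a, f a = φ a := fun a => rfl
    have hf0 : f (FreeAlgebra.ι k 0) = -(FreeAlgebra.ι k 0) := by rw [hfeq]; exact hφ0
    have hf1 : f (FreeAlgebra.ι k 1) = FreeAlgebra.ι k 0 - FreeAlgebra.ι k 1 := by rw [hfeq]; exact hφ1
    have hfι : ∀ x : Fin 2, f (FreeAlgebra.ι k x) ∈ deg k 2 1 := by
      intro x
      fin_cases x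
      · show f (FreeAlgebra.ι k 0) ∈ deg k 2 1
        rw [hf0]; exact neg_mem (ι_mem_deg_one k 2 0)
      · show f (FreeAlgebra.ι k 1) ∈ deg k 2 1
        rw [hf1]; exact sub_mem (ι_mem_deg_one k 2 0) (ι_mem_deg_one k 2 1)
    -- degree preservation on words
    have hfword : ∀ l : List (Fin 2),
        f ((l.map (FreeAlgebra.ι k)).prod) ∈ deg k 2 l.length := by
      intro l
      induction l with
      | nil => simpa using one_mem_deg k 2
      | cons x t ih =>
          rw [List.map_cons, List.prod_cons, _root_.map_mul]
          simpa [Nat.add_comm] using mul_mem_deg k 2 (hfι x) ih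
    -- derivations kill 1
    have hdM1 : dM (1 : FreeAlgebra k (Fin 2)) = 0 := by
      have h := hLM 0 1 1 (one_mem_deg k 2)
      simp only [one_mul, mul_one, pow_zero, one_smul] at h
      nth_rewrite 1 [← add_zero (dM 1)] at h
      exact (add_left_cancel h).symm
    have hdN1 : dN (1 : FreeAlgebra k (Fin 2)) = 0 := by
      have h := hLN 0 1 1 (one_mem_deg k 2)
      simp only [one_mul, mul_one, pow_zero, one_smul] at h
      nth_rewrite 1 [← add_zero (dN 1)] at h
      exact (add_left_cancel h).symm
    -- generator identities
    have hgen : ∀ x : Fin 2, f (dM (FreeAlgebra.ι k x)) = dN (f (FreeAlgebra.ι k x)) := by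
      intro x
      fin_cases x
      · show f (dM (FreeAlgebra.ι k 0)) = dN (f (FreeAlgebra.ι k 0))
        rw [hM1, _root_.map_mul, hf1, hf0, _root_.map_neg, hN1]
        noncomm_ring
      · show f (dM (FreeAlgebra.ι k 1)) = dN (f (FreeAlgebra.ι k 1))
        rw [hM2, _root_.map_zero, hf1, _root_.map_sub, hN1, hN2]
        simp
    -- commutation on words
    have hcomm : ∀ l : List (Fin 2),
        f (dM ((l.map (FreeAlgebra.ι k)).prod)) = dN (f ((l.map (FreeAlgebra.ι k)).prod)) := by
      intro l
      induction l with
      | nil => simp [hdM1, hdN1]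
      | cons x t ih =>
          rw [List.map_cons, List.prod_cons,
            hLM 1 (FreeAlgebra.ι k x) _ (ι_mem_deg_one k 2 x),
            _root_.map_add, _root_.map_smul, _root_.map_mul, _root_.map_mul,
            _root_.map_mul, hgen x, ih,
            hLN 1 (f (FreeAlgebra.ι k x)) _ (hfι x)]
    refine ⟨f, ?_, ?_⟩
    · intro i a ha
      rw [deg_eq k 2 i] at ha
      induction ha using Submodule.span_induction with
      | mem w hw =>
          obtain ⟨l, hl, rfl⟩ := hw
          rw [← hl]
          exact hfword l
      | zero => rw [_root_.map_zero]; exact zero_mem _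
      | add u v _ _ hu hv => rw [_root_.map_add]; exact add_mem hu hv
      | smul c u _ hu => rw [_root_.map_smul]; exact Submodule.smul_mem _ _ hu
    · intro a
      have ha := mem_span_words k 2 a
      induction ha using Submodule.span_induction with
      | mem w hw =>
          obtain ⟨l, rfl⟩ := hw
          exact hcomm l
      | zero => simp
      | add u v _ _ hu hv => simp only [_root_.map_add, hu, hv]
      | smul c u _ hu => simp only [_root_.map_smul, hu]
end

section
/- Let N¹, N² be 2×2 matrices and A = (a_{ij}) ∈ GL₂(k) with inverse (b_{ij}). If ∑_j a_{ij}N^j = AᵀM^iA for i = 1,2 and (M¹,M²) is a crisscross pair, then (N¹,N²) is a crisscross pair. -/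
open Matrix

/-- The `n²×n` matrix obtained by stacking `M^1,…,M^n`. -/
def stack {k : Type*} [CommRing k] {n : ℕ}
    (M : Fin n → Matrix (Fin n) (Fin n) k) : Matrix (Fin n × Fin n) (Fin n) k :=
  fun p b => M p.1 p.2 b

/-- the crisscross property is preserved under the
change-of-basis action: if `A ∈ GL₂(k)`, `∑_j a_{ij}Nʲ = AᵀMⁱA` for
`i = 1,2`, and `(M¹,M²)` is a crisscross pair, then so is `(N¹,N²)`. -/
theorem stmt17 {k : Type*} [Field k] [CharZero k]
    (M N : Fin 2 → Matrix (Fin 2) (Fin 2) k)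
    (A : Matrix (Fin 2) (Fin 2) k) (hA : IsUnit A.det)
    (h : ∀ i, (∑ j, A i j • N j) = Aᵀ * M i * A)
    (hM : crisscross M) :
    crisscross N := by
  set B := A⁻¹ with hBdef
  have hAB : A * B = 1 := Matrix.mul_nonsing_inv A hA
  have hBA : B * A = 1 := Matrix.nonsing_inv_mul A hA
  have h' : ∀ i u v, A i 0 * N 0 u v + A i 1 * N 1 u v = (Aᵀ * M i * A) u v := by
    intro i u v
    have := congrFun (congrFun (h i) u) v
    simpa [Fin.sum_univ_two, Matrix.sum_apply] using this
  have hbae : ∀ x y, B x 0 * A 0 y + B x 1 * A 1 y = (1 : Matrix (Fin 2) (Fin 2) k) x y := by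
    intro x y
    have := congrFun (congrFun hBA x) y
    simpa [Matrix.mul_apply, Fin.sum_univ_two] using this
  have habe : ∀ x y, A x 0 * B 0 y + A x 1 * B 1 y = (1 : Matrix (Fin 2) (Fin 2) k) x y := by
    intro x y
    have := congrFun (congrFun hAB x) y
    simpa [Matrix.mul_apply, Fin.sum_univ_two] using this
  have hab00 : A 0 0 * B 0 0 + A 0 1 * B 1 0 = 1 := by simpa using habe 0 0
  have hab01 : A 0 0 * B 0 1 + A 0 1 * B 1 1 = 0 := by simpa [Matrix.one_apply] using habe 0 1
  have hab10 : A 1 0 * B 0 0 + A 1 1 * B 1 0 = 0 := by simpa [Matrix.one_apply] using habe 1 0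
  have hab11 : A 1 0 * B 0 1 + A 1 1 * B 1 1 = 1 := by simpa using habe 1 1
  have hba00 : B 0 0 * A 0 0 + B 0 1 * A 1 0 = 1 := by simpa using hbae 0 0
  have hba01 : B 0 0 * A 0 1 + B 0 1 * A 1 1 = 0 := by simpa [Matrix.one_apply] using hbae 0 1
  have hba10 : B 1 0 * A 0 0 + B 1 1 * A 1 0 = 0 := by simpa [Matrix.one_apply] using hbae 1 0
  have hba11 : B 1 0 * A 0 1 + B 1 1 * A 1 1 = 1 := by simpa using hbae 1 1
  have hNe : ∀ m u v, N m u v = B m 0 * (Aᵀ * M 0 * A) u v + B m 1 * (Aᵀ * M 1 * A) u v := by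
    intro m u v
    fin_cases m <;> simp only [Fin.zero_eta, Fin.mk_one, Fin.isValue]
    · linear_combination B 0 0 * h' 0 u v + B 0 1 * h' 1 u v - N 0 u v * hba00 - N 1 u v * hba01
    · linear_combination B 1 0 * h' 0 u v + B 1 1 * h' 1 u v - N 0 u v * hba10 - N 1 u v * hba11
  have hMe : ∀ n r s q : Fin 2,
      M 0 r s * M n 0 q - M n r 0 * M 0 s q + (M 1 r s * M n 1 q - M n r 1 * M 1 s q) = 0 := by
    intro n r s q
    have hx := hM n s r q
    simp only [Fin.sum_univ_two] at hx
    linear_combination hx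
  intro i j a b
  simp only [hNe, Matrix.mul_apply, Matrix.transpose_apply, Fin.sum_univ_two]
  linear_combination
    (B i 0 * A 0 a * A 0 j * A 0 b) * hMe 0 0 0 0 +
    (B i 0 * A 0 a * A 0 j * A 1 b) * hMe 0 0 0 1 +
    (B i 0 * A 0 a * A 1 j * A 0 b) * hMe 0 0 1 0 +
    (B i 0 * A 0 a * A 1 j * A 1 b) * hMe 0 0 1 1 +
    (B i 0 * A 1 a * A 0 j * A 0 b) * hMe 0 1 0 0 +
    (B i 0 * A 1 a * A 0 j * A 1 b) * hMe 0 1 0 1 +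
    (B i 0 * A 1 a * A 1 j * A 0 b) * hMe 0 1 1 0 +
    (B i 0 * A 1 a * A 1 j * A 1 b) * hMe 0 1 1 1 +
    (B i 1 * A 0 a * A 0 j * A 0 b) * hMe 1 0 0 0 +
    (B i 1 * A 0 a * A 0 j * A 1 b) * hMe 1 0 0 1 +
    (B i 1 * A 0 a * A 1 j * A 0 b) * hMe 1 0 1 0 +
    (B i 1 * A 0 a * A 1 j * A 1 b) * hMe 1 0 1 1 +
    (B i 1 * A 1 a * A 0 j * A 0 b) * hMe 1 1 0 0 +
    (B i 1 * A 1 a * A 0 j * A 1 b) * hMe 1 1 0 1 +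
    (B i 1 * A 1 a * A 1 j * A 0 b) * hMe 1 1 1 0 +
    (B i 1 * A 1 a * A 1 j * A 1 b) * hMe 1 1 1 1 +
    ((B i 0 * M 0 0 0 * A 0 b + B i 0 * M 0 0 1 * A 1 b + B i 1 * M 1 0 0 * A 0 b + B i 1 * M 1 0 1 * A 1 b) * (A 0 a * M 0 0 0 * A 0 j + A 0 a * M 0 0 1 * A 1 j + A 1 a * M 0 1 0 * A 0 j + A 1 a * M 0 1 1 * A 1 j) - (B i 0 * A 0 a * M 0 0 0 + B i 0 * A 1 a * M 0 1 0 + B i 1 * A 0 a * M 1 0 0 + B i 1 * A 1 a * M 1 1 0) * (A 0 j * M 0 0 0 * A 0 b + A 0 j * M 0 0 1 * A 1 b + A 1 j * M 0 1 0 * A 0 b + A 1 j * M 0 1 1 * A 1 b)) * hab00 +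
    ((B i 0 * M 0 0 0 * A 0 b + B i 0 * M 0 0 1 * A 1 b + B i 1 * M 1 0 0 * A 0 b + B i 1 * M 1 0 1 * A 1 b) * (A 0 a * M 1 0 0 * A 0 j + A 0 a * M 1 0 1 * A 1 j + A 1 a * M 1 1 0 * A 0 j + A 1 a * M 1 1 1 * A 1 j) - (B i 0 * A 0 a * M 0 0 0 + B i 0 * A 1 a * M 0 1 0 + B i 1 * A 0 a * M 1 0 0 + B i 1 * A 1 a * M 1 1 0) * (A 0 j * M 1 0 0 * A 0 b + A 0 j * M 1 0 1 * A 1 b + A 1 j * M 1 1 0 * A 0 b + A 1 j * M 1 1 1 * A 1 b)) * hab01 +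
    ((B i 0 * M 0 1 0 * A 0 b + B i 0 * M 0 1 1 * A 1 b + B i 1 * M 1 1 0 * A 0 b + B i 1 * M 1 1 1 * A 1 b) * (A 0 a * M 0 0 0 * A 0 j + A 0 a * M 0 0 1 * A 1 j + A 1 a * M 0 1 0 * A 0 j + A 1 a * M 0 1 1 * A 1 j) - (B i 0 * A 0 a * M 0 0 1 + B i 0 * A 1 a * M 0 1 1 + B i 1 * A 0 a * M 1 0 1 + B i 1 * A 1 a * M 1 1 1) * (A 0 j * M 0 0 0 * A 0 b + A 0 j * M 0 0 1 * A 1 b + A 1 j * M 0 1 0 * A 0 b + A 1 j * M 0 1 1 * A 1 b)) * hab10 +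
    ((B i 0 * M 0 1 0 * A 0 b + B i 0 * M 0 1 1 * A 1 b + B i 1 * M 1 1 0 * A 0 b + B i 1 * M 1 1 1 * A 1 b) * (A 0 a * M 1 0 0 * A 0 j + A 0 a * M 1 0 1 * A 1 j + A 1 a * M 1 1 0 * A 0 j + A 1 a * M 1 1 1 * A 1 j) - (B i 0 * A 0 a * M 0 0 1 + B i 0 * A 1 a * M 0 1 1 + B i 1 * A 0 a * M 1 0 1 + B i 1 * A 1 a * M 1 1 1) * (A 0 j * M 1 0 0 * A 0 b + A 0 j * M 1 0 1 * A 1 b + A 1 j * M 1 1 0 * A 0 b + A 1 j * M 1 1 1 * A 1 b)) * hab11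
end
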